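/- arXiv:1209.1329 — 2 statements merged into one kernel-verified Lean document; each statement's English description precedes it below -/
import Mathlib

section
/- For every integer n ≥ 1 and every real number u, the derivative of the Bessel polynomial satisfies q_n′(u) = q_n(u) − (u/(2n − 1)) · q_{n−1}(u). -/
open Finset

/-- The Bessel polynomial `q_n(u) = ∑_{k=0}^n (n!(2n−k)! 2^k)/((2n)!(n−k)! k!) u^k`. -/
noncomputable def besselQ (n : ℕ) (u : ℝ) : ℝ :=
  ∑ k ∈ Finset.range (n + 1),
    ((n.factorial : ℝ) * (2 * n - k).factorial * 2 ^ k) /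
      ((2 * n).factorial * (n - k).factorial * k.factorial) * u ^ k

/-!
Write the coefficient of `u^k` in `q_n` as `2^k C(n,k) / (2n)(2n-1)⋯(2n-k+1)` and compare
coefficients of `u^k` on both sides. Pulling the factors `2n` and `2n-1` out of the falling
factorials clears all denominators, and what remains is Pascal's rule together with
`(k+1) C(m,k+1) = (m-k) C(m,k)`.
-/

open Polynomial Nat

lemma cast_descFactorial_ne_zero {R : Type*} [AddMonoidWithOne R] [CharZero R] {n k : ℕ}
    (h : k ≤ n) : (n.descFactorial k : R) ≠ 0 :=
  Nat.cast_ne_zero.mpr (Nat.descFactorial_eq_zero_iff_lt.not.mpr (by omega))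

/-- Unlike the factorial expression in `besselQ`, whose `(n - k)!` truncates, this vanishes
for `k > n`. -/
noncomputable def besselQCoeff (n k : ℕ) : ℝ :=
  2 ^ k * n.choose k / (2 * n).descFactorial k

lemma besselQCoeff_eq_factorial {n k : ℕ} (hk : k ≤ n) :
    besselQCoeff n k = (n ! : ℝ) * (2 * n - k)! * 2 ^ k / ((2 * n)! * (n - k)! * k !) := by
  have hd : ((2 * n - k)! : ℝ) * (2 * n).descFactorial k = (2 * n)! := by
    exact_mod_cast Nat.factorial_mul_descFactorial (by omega : k ≤ 2 * n)
  have := cast_descFactorial_ne_zero (R := ℝ) (by omega : k ≤ 2 * n)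
  rw [besselQCoeff, Nat.cast_choose ℝ hk, ← hd]
  field_simp

lemma besselQCoeff_eq_zero_of_lt {n k : ℕ} (h : n < k) : besselQCoeff n k = 0 := by
  simp [besselQCoeff, Nat.choose_eq_zero_of_lt h]

lemma besselQCoeff_zero (n : ℕ) : besselQCoeff n 0 = 1 := by
  simp [besselQCoeff]

lemma besselQCoeff_succ_one (m : ℕ) : besselQCoeff (m + 1) 1 = 1 := by
  simp only [besselQCoeff, Nat.choose_one_right, Nat.descFactorial_one]
  push_cast
  have : (m : ℝ) + 1 ≠ 0 := by positivity
  field_simp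

lemma besselQCoeff_succ_succ (m k : ℕ) :
    (k + 2) * besselQCoeff (m + 1) (k + 2) =
      besselQCoeff (m + 1) (k + 1) - besselQCoeff m k / (2 * m + 1) := by
  rcases lt_or_ge m k with hmk | hkm
  · simp [besselQCoeff_eq_zero_of_lt, hmk, (by omega : m + 1 < k + 1),
      (by omega : m + 1 < k + 2)]
  have desc_succ_succ : (2 * (m + 1)).descFactorial (k + 2) =
      (2 * m + 2) * ((2 * m + 1) * (2 * m).descFactorial k) := by
    rw [show 2 * (m + 1) = 2 * m + 1 + 1 by ring, Nat.succ_descFactorial_succ,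
      Nat.succ_descFactorial_succ]
  have desc_succ : (2 * (m + 1)).descFactorial (k + 1) =
      (2 * m + 2) * (2 * m + 1).descFactorial k := by
    rw [show 2 * (m + 1) = 2 * m + 1 + 1 by ring, Nat.succ_descFactorial_succ]
  have desc_shift : ((2 * m + 1 : ℝ) - k) * (2 * m + 1).descFactorial k =
      (2 * m + 1) * (2 * m).descFactorial k := by
    have h := congrArg (Nat.cast : ℕ → ℝ) (Nat.succ_descFactorial (2 * m) k)
    push_cast [Nat.cast_sub (by omega : k ≤ 2 * m + 1)] at h
    exact h
  have choose_absorb : ((k : ℝ) + 2) * (m + 1).choose (k + 2) = (m + 1) * m.choose (k + 1) := by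
    rw [mul_comm]
    exact_mod_cast (Nat.add_one_mul_choose_eq m (k + 1)).symm
  have pascal : ((m + 1).choose (k + 1) : ℝ) = m.choose k + m.choose (k + 1) := by
    exact_mod_cast Nat.choose_succ_succ' m k
  have choose_ratio : (m.choose (k + 1) : ℝ) * (k + 1) = m.choose k * (m - k) := by
    exact_mod_cast Nat.choose_succ_right_eq m k
  have := cast_descFactorial_ne_zero (R := ℝ) (by omega : k ≤ 2 * m)
  have := cast_descFactorial_ne_zero (R := ℝ) (by omega : k ≤ 2 * m + 1)
  simp only [besselQCoeff, desc_succ_succ, desc_succ]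
  push_cast
  field_simp
  linear_combination (2 ^ (k + 2) * ((2 * m + 1).descFactorial k : ℝ)) * choose_absorb
    - (2 * m + 1) * ((2 * m).descFactorial k : ℝ) * 2 ^ (k + 1) * pascal
    + 2 ^ (k + 1) * (m.choose k + m.choose (k + 1) : ℝ) * desc_shift
    + 2 ^ (k + 1) * ((2 * m + 1).descFactorial k : ℝ) * choose_ratio

noncomputable def besselQPoly (n : ℕ) : ℝ[X] :=
  ∑ k ∈ range (n + 1), C (besselQCoeff n k) * X ^ k

lemma coeff_besselQPoly (n k : ℕ) : (besselQPoly n).coeff k = besselQCoeff n k := by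
  simp only [besselQPoly, finsetSum_coeff, coeff_C_mul_X_pow]
  rw [Finset.sum_ite_eq]
  split_ifs with hk
  · rfl
  · exact (besselQCoeff_eq_zero_of_lt (by simpa using hk)).symm

lemma eval_besselQPoly (n : ℕ) (u : ℝ) : (besselQPoly n).eval u = besselQ n u := by
  simp only [besselQPoly, eval_finsetSum, eval_mul, eval_C, eval_pow, eval_X, besselQ]
  refine Finset.sum_congr rfl fun k hk => ?_
  rw [besselQCoeff_eq_factorial (Nat.lt_succ_iff.mp (Finset.mem_range.mp hk))]

lemma derivative_besselQPoly (m : ℕ) :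
    derivative (besselQPoly (m + 1)) =
      besselQPoly (m + 1) - C (2 * (m : ℝ) + 1)⁻¹ * (X * besselQPoly m) := by
  ext (_ | k)
  · simp [coeff_derivative, coeff_besselQPoly, besselQCoeff_zero, besselQCoeff_succ_one]
  · simp only [coeff_derivative, coeff_sub, coeff_C_mul, coeff_X_mul, coeff_besselQPoly]
    push_cast
    linear_combination besselQCoeff_succ_succ m k

/-- Derivative relation for the Bessel polynomials:
`q_n′(u) = q_n(u) − (u/(2n − 1)) q_{n−1}(u)` for `n ≥ 1`. -/
theorem besselQ_deriv (n : ℕ) (hn : 1 ≤ n) (u : ℝ) :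
    deriv (besselQ n) u =
      besselQ n u - u / (2 * (n : ℝ) - 1) * besselQ (n - 1) u := by
  obtain ⟨m, rfl⟩ := Nat.exists_eq_add_of_le' hn
  have besselQ_eq_eval : ∀ n, besselQ n = fun u => (besselQPoly n).eval u :=
    fun n => funext fun u => (eval_besselQPoly n u).symm
  rw [besselQ_eq_eval, Polynomial.deriv, derivative_besselQPoly]
  simp [besselQ_eq_eval]
  ring
end

section
/- For all integers n, m ≥ 1, all real numbers a₁, a₂ with a₂ ≠ 0, and every integer k with 0 ≤ k ≤ n+m−1, the linearization coefficients satisfy β_k^{(n+1,m−1)}(a₁,a₂) − (a₁²(2m−1)(2m+1))/(a₂²(2n−1)(2n+1)) · β_k^{(n−1,m+1)}(a₁,a₂) = β_k^{(n,m−1)}(a₁,a₂) − (a₁²(2m−1)(2m+1))/(a₂²(2n−1)(2n+1)) · β_k^{(n−1,m)}(a₁,a₂). -/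
/-!
The Bessel polynomials satisfy the three-term recurrence
`(2s+1)(2s+3) q_{s+2}(u) = (2s+1)(2s+3) q_{s+1}(u) + u² q_s(u)`.
Applying it to `q_{n+1}(a₁u)` and to `q_{m+1}(a₂u)`, the difference of the two products
`q_{n+1}(a₁u) q_{m−1}(a₂u) − C q_{n−1}(a₁u) q_{m+1}(a₂u)` and
`q_n(a₁u) q_{m−1}(a₂u) − C q_{n−1}(a₁u) q_m(a₂u)` becomes a multiple of
`q_{n−1}(a₁u) q_{m−1}(a₂u)` whose factor `a₁²u²/((2n−1)(2n+1)) − C a₂²u²/((2m−1)(2m+1))` vanishes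
for the given `C`. As `q_k` has degree exactly `k`, the `q_k` are linearly independent, so the
expansions of the two products have the same coefficients.
-/

open Finset

open Polynomial Nat

/-- `n.choose k` makes this vanish for `k > n`; the coefficient formula inside `besselQ` does not,
since `n - k` truncates. -/
noncomputable def besselCoeff (n k : ℕ) : ℝ := 2 ^ k * n.choose k * (2 * n - k)! / (2 * n)!

lemma besselCoeff_of_le {n k : ℕ} (hk : k ≤ n) :
    besselCoeff n k = (n ! : ℝ) * (2 * n - k)! * 2 ^ k / ((2 * n)! * (n - k)! * k !) := by
  have hchoose : (n.choose k * k ! * (n - k)! : ℝ) = n ! := by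
    exact_mod_cast choose_mul_factorial_mul_factorial hk
  rw [besselCoeff, ← hchoose]
  field_simp

lemma besselCoeff_of_lt {n k : ℕ} (hk : n < k) : besselCoeff n k = 0 := by
  simp [besselCoeff, choose_eq_zero_of_lt hk]

lemma besselCoeff_zero (n : ℕ) : besselCoeff n 0 = 1 := by
  simp [besselCoeff, factorial_ne_zero]

lemma besselCoeff_succ_one (n : ℕ) : besselCoeff (n + 1) 1 = 1 := by
  rw [besselCoeff, show 2 * (n + 1) = 2 * n + 1 + 1 by ring, Nat.add_sub_cancel,
    factorial_succ (2 * n + 1), choose_one_right]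
  push_cast
  field_simp
  ring

lemma besselCoeff_self_pos (n : ℕ) : 0 < besselCoeff n n := by
  simp only [besselCoeff, choose_self]
  positivity

lemma add_two_choose_add_two_mul (n k : ℕ) :
    (n + 2).choose (k + 2) * ((k + 2) * (k + 1)) = (n + 2) * (n + 1) * n.choose k := by
  rw [← mul_assoc, ← add_one_mul_choose_eq (n + 1) (k + 1), mul_assoc,
    ← add_one_mul_choose_eq, mul_assoc]

lemma add_one_choose_add_two_mul (n k : ℕ) :
    (n + 1).choose (k + 2) * ((k + 2) * (k + 1)) = (n + 1) * (n - k) * n.choose k := by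
  rw [← mul_assoc, ← add_one_mul_choose_eq, mul_assoc, choose_succ_right_eq]
  ring

lemma besselCoeff_add_two (s j : ℕ) :
    (2 * s + 1) * (2 * s + 3) * besselCoeff (s + 2) (j + 2) =
      (2 * s + 1) * (2 * s + 3) * besselCoeff (s + 1) (j + 2) + besselCoeff s j := by
  rcases lt_or_ge s j with hsj | hjs
  · simp [besselCoeff_of_lt, hsj, besselCoeff_of_lt (by omega : s + 1 < j + 2)]
  obtain ⟨d, rfl⟩ := Nat.exists_eq_add_of_le hjs
  have hc2 : ((j + d + 2).choose (j + 2) : ℝ) * ((j + 2) * (j + 1)) =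
      (j + d + 2) * (j + d + 1) * (j + d).choose j := by
    exact_mod_cast add_two_choose_add_two_mul (j + d) j
  have hc1 : ((j + d + 1).choose (j + 2) : ℝ) * ((j + 2) * (j + 1)) =
      (j + d + 1) * d * (j + d).choose j := by
    have h := add_one_choose_add_two_mul (j + d) j
    rw [Nat.add_sub_cancel_left] at h
    exact_mod_cast h
  simp only [besselCoeff]
  rw [show 2 * (j + d + 2) - (j + 2) = j + 2 * d + 2 by omega,
    show 2 * (j + d + 1) - (j + 2) = j + 2 * d by omega, show 2 * (j + d) - j = j + 2 * d by omega,
    show 2 * (j + d + 2) = 2 * (j + d) + 4 by ring, show 2 * (j + d + 1) = 2 * (j + d) + 2 by ring]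
  rw [eq_div_of_mul_eq (by positivity) hc2, eq_div_of_mul_eq (by positivity) hc1]
  simp only [factorial_succ]
  push_cast
  field_simp
  ring

noncomputable def besselPoly (n : ℕ) : ℝ[X] :=
  ∑ k ∈ range (n + 1), C (besselCoeff n k) * X ^ k

lemma eval_besselPoly (n : ℕ) (u : ℝ) : (besselPoly n).eval u = besselQ n u := by
  simp only [besselPoly, besselQ, eval_finsetSum, eval_mul, eval_C, eval_pow, eval_X]
  refine sum_congr rfl fun k hk => ?_
  rw [besselCoeff_of_le (mem_range_succ_iff.mp hk)]

lemma coeff_besselPoly (n i : ℕ) : (besselPoly n).coeff i = besselCoeff n i := by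
  simp only [besselPoly, finsetSum_coeff, coeff_C_mul_X_pow, sum_ite_eq, mem_range]
  split_ifs with hi
  · rfl
  · exact (besselCoeff_of_lt (by omega)).symm

lemma degree_besselPoly (n : ℕ) : (besselPoly n).degree = n := by
  refine degree_eq_of_le_of_coeff_ne_zero ?_ ?_
  · refine (degree_le_iff_coeff_zero _ _).mpr fun i hi => ?_
    rw [coeff_besselPoly, besselCoeff_of_lt (by exact_mod_cast hi)]
  · rw [coeff_besselPoly]
    exact (besselCoeff_self_pos n).ne'

noncomputable def besselSeq : Polynomial.Sequence ℝ where
  elems' := besselPoly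
  degree_eq' := degree_besselPoly

lemma besselPoly_add_two (s : ℕ) :
    ((2 * s + 1) * (2 * s + 3) : ℝ) • besselPoly (s + 2) =
      ((2 * s + 1) * (2 * s + 3) : ℝ) • besselPoly (s + 1) + X ^ 2 * besselPoly s := by
  ext (_ | _ | j)
  all_goals simp only [coeff_add, coeff_smul, smul_eq_mul, coeff_X_pow_mul', coeff_besselPoly]
  · simp [besselCoeff_zero]
  · simp [besselCoeff_succ_one]
  · simpa using besselCoeff_add_two s j

lemma besselQ_add_two (s : ℕ) (u : ℝ) :
    (2 * s + 1) * (2 * s + 3) * besselQ (s + 2) u =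
      (2 * s + 1) * (2 * s + 3) * besselQ (s + 1) u + u ^ 2 * besselQ s u := by
  simpa [eval_besselPoly] using congrArg (eval u) (besselPoly_add_two s)

lemma coeff_eq_of_sum_mul_besselQ_eq {N M : ℕ} {α β : ℕ → ℝ}
    (h : ∀ u, ∑ i ∈ range N, α i * besselQ i u = ∑ i ∈ range M, β i * besselQ i u)
    {k : ℕ} (hkN : k < N) (hkM : k < M) : α k = β k := by
  have hlc : Finsupp.linearCombination ℝ besselSeq (∑ i ∈ range N, Finsupp.single i (α i)) =
      Finsupp.linearCombination ℝ besselSeq (∑ i ∈ range M, Finsupp.single i (β i)) := by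
    simp only [map_sum, Finsupp.linearCombination_single]
    refine Polynomial.funext fun u => ?_
    simpa [eval_finsetSum, besselSeq, eval_besselPoly] using h u
  have := DFunLike.congr_fun (besselSeq.linearIndependent hlc) k
  simpa [Finsupp.finsetSum_apply, Finsupp.single_apply, hkN, hkM] using this

lemma besselQ_mul_exchange (s t : ℕ) {x y c : ℝ}
    (hc : x ^ 2 * ((2 * t + 1) * (2 * t + 3)) = c * y ^ 2 * ((2 * s + 1) * (2 * s + 3))) :
    besselQ (s + 2) x * besselQ t y - c * (besselQ s x * besselQ (t + 2) y) =
      besselQ (s + 1) x * besselQ t y - c * (besselQ s x * besselQ (t + 1) y) := by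
  have hs : ((2 * s + 1) * (2 * s + 3) : ℝ) ≠ 0 := by positivity
  have ht : ((2 * t + 1) * (2 * t + 3) : ℝ) ≠ 0 := by positivity
  refine mul_left_cancel₀ (mul_ne_zero hs ht) ?_
  linear_combination ((2 * t + 1) * (2 * t + 3) : ℝ) * besselQ t y * besselQ_add_two s x
    - c * ((2 * s + 1) * (2 * s + 3) : ℝ) * besselQ s x * besselQ_add_two t y
    + besselQ s x * besselQ t y * hc

/-- For `n, m ≥ 1`, `a₂ ≠ 0` and `0 ≤ k ≤ n+m−1`, the linearization coefficients satisfy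
`β_k^{(n+1,m−1)} − C β_k^{(n−1,m+1)} = β_k^{(n,m−1)} − C β_k^{(n−1,m)}` where
`C = (a₁²(2m−1)(2m+1))/(a₂²(2n−1)(2n+1))`.  Here `β1, β2, β3, β4` denote, respectively,
the linearization coefficients of `q_{n+1}(a₁u) q_{m−1}(a₂u)`, `q_{n−1}(a₁u) q_{m+1}(a₂u)`,
`q_n(a₁u) q_{m−1}(a₂u)` and `q_{n−1}(a₁u) q_m(a₂u)`. -/
theorem linearization_recurrence (n m k : ℕ) (hn : 1 ≤ n) (hm : 1 ≤ m)
    (hk : k ≤ n + m - 1) (a1 a2 : ℝ) (ha2 : a2 ≠ 0) (β1 β2 β3 β4 : ℕ → ℝ)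
    (h1 : ∀ u : ℝ, besselQ (n + 1) (a1 * u) * besselQ (m - 1) (a2 * u) =
      ∑ i ∈ Finset.range (n + m + 1), β1 i * besselQ i u)
    (h2 : ∀ u : ℝ, besselQ (n - 1) (a1 * u) * besselQ (m + 1) (a2 * u) =
      ∑ i ∈ Finset.range (n + m + 1), β2 i * besselQ i u)
    (h3 : ∀ u : ℝ, besselQ n (a1 * u) * besselQ (m - 1) (a2 * u) =
      ∑ i ∈ Finset.range (n + m), β3 i * besselQ i u)
    (h4 : ∀ u : ℝ, besselQ (n - 1) (a1 * u) * besselQ m (a2 * u) =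
      ∑ i ∈ Finset.range (n + m), β4 i * besselQ i u) :
    β1 k -
      a1 ^ 2 * (2 * (m : ℝ) - 1) * (2 * (m : ℝ) + 1) /
        (a2 ^ 2 * (2 * (n : ℝ) - 1) * (2 * (n : ℝ) + 1)) * β2 k =
    β3 k -
      a1 ^ 2 * (2 * (m : ℝ) - 1) * (2 * (m : ℝ) + 1) /
        (a2 ^ 2 * (2 * (n : ℝ) - 1) * (2 * (n : ℝ) + 1)) * β4 k := by
  obtain ⟨s, rfl⟩ : ∃ s, n = s + 1 := ⟨n - 1, by omega⟩
  obtain ⟨t, rfl⟩ : ∃ t, m = t + 1 := ⟨m - 1, by omega⟩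
  simp only [Nat.add_sub_cancel] at h1 h2 h3 h4
  set c := a1 ^ 2 * (2 * ((t + 1 : ℕ) : ℝ) - 1) * (2 * ((t + 1 : ℕ) : ℝ) + 1) /
    (a2 ^ 2 * (2 * ((s + 1 : ℕ) : ℝ) - 1) * (2 * ((s + 1 : ℕ) : ℝ) + 1)) with hc
  have hexpand : ∀ u, ∑ i ∈ range (s + 1 + (t + 1) + 1), (β1 i - c * β2 i) * besselQ i u =
      ∑ i ∈ range (s + 1 + (t + 1)), (β3 i - c * β4 i) * besselQ i u := by
    intro u
    simp only [sub_mul, mul_assoc, sum_sub_distrib, ← mul_sum, ← h1, ← h2, ← h3, ← h4]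
    refine besselQ_mul_exchange s t ?_
    have hc' :
        c = a1 ^ 2 * ((2 * t + 1) * (2 * t + 3)) / (a2 ^ 2 * ((2 * s + 1) * (2 * s + 3))) := by
      rw [hc]; push_cast; ring
    rw [hc']
    field_simp
  exact coeff_eq_of_sum_mul_besselQ_eq hexpand (by omega) (by omega)
end
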